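/- arXiv:1310.5456 — 2 statements merged into one kernel-verified Lean document; each statement's English description precedes it below -/
import Mathlib

section
/- For every positive integer k, every finite bipartite graph admits a k-uniform integer additive set-indexer. -/
open Pointwise

/-- The induced edge labeling: the sumset of the labels of the endpoints. -/
def edgeSum {V : Type*} (f : V → Finset ℕ) : Sym2 V → Finset ℕ :=
  Sym2.lift ⟨fun u v => f u + f v, fun u v => by simp [add_comm]⟩

/-- An integer additive set-indexer: an injective labeling of the vertices by
finite nonempty sets of naturals whose induced edge labeling is injective on edges. -/
def IsIASI {V : Type*} (G : SimpleGraph V) (f : V → Finset ℕ) : Prop :=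
  Function.Injective f ∧ (∀ v, (f v).Nonempty) ∧
    ∀ e₁ ∈ G.edgeSet, ∀ e₂ ∈ G.edgeSet, edgeSum f e₁ = edgeSum f e₂ → e₁ = e₂

/-- A `k`-uniform IASI: every edge has set-indexing number `k`. -/
def IsUniformIASI {V : Type*} (G : SimpleGraph V) (f : V → Finset ℕ) (k : ℕ) : Prop :=
  IsIASI G f ∧ ∀ u v, G.Adj u v → (f u + f v).card = k

/-- A weakly `k`-uniform IASI: a `k`-uniform IASI assigning only singleton sets
and `k`-element sets to the vertices. -/
def IsWeaklyUniformIASI {V : Type*} (G : SimpleGraph V) (f : V → Finset ℕ) (k : ℕ) : Prop :=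
  IsUniformIASI G f k ∧ ∀ v, (f v).card = 1 ∨ (f v).card = k

/-!
Index the vertices injectively by `ι` and label `v` by the interval `[2 ^ ι v, 2 ^ ι v + w v]`.
Sums of intervals are intervals, so the edge `uv` gets an interval with `w u + w v + 1` elements
whose least element `2 ^ ι u + 2 ^ ι v` determines the pair `{ι u, ι v}` by uniqueness of binary
expansions. Taking `w = 0` on one colour class and `w = k - 1` on the other makes every edge
label have exactly `k` elements.
-/

namespace Finset

lemma Icc_add_Icc {α : Type*} [AddCommMonoid α] [LinearOrder α] [IsOrderedAddMonoid α]
    [AddLeftReflectLE α] [ExistsAddOfLE α] [LocallyFiniteOrder α] [DecidableEq α]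
    {a b c d : α} (hab : a ≤ b) (hcd : c ≤ d) : Icc a b + Icc c d = Icc (a + c) (b + d) :=
  coe_injective <| by push_cast; exact Set.Icc_add_Icc hab hcd

lemma Icc_eq_Icc_iff {α : Type*} [PartialOrder α] [LocallyFiniteOrder α] {a b c d : α}
    (hab : a ≤ b) : Icc a b = Icc c d ↔ a = c ∧ b = d := by
  rw [← coe_inj, coe_Icc, coe_Icc, Set.Icc_eq_Icc_iff hab]

end Finset

lemma Nat.sym2_eq_of_two_pow_add_two_pow_eq {i j i' j' : ℕ} (hij : i ≠ j) (hij' : i' ≠ j')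
    (h : 2 ^ i + 2 ^ j = 2 ^ i' + 2 ^ j') : s(i, j) = s(i', j') := by
  have hpair : ({i, j} : Finset ℕ) = {i', j'} :=
    Finset.geomSum_injective le_rfl (by simpa [Finset.sum_pair hij, Finset.sum_pair hij'] using h)
  exact Sym2.ext fun x => by simpa using congrArg (x ∈ ·) hpair

lemma SimpleGraph.Coloring.val_add_val_eq_one {V : Type*} {G : SimpleGraph V}
    (c : G.Coloring (Fin 2)) {u v : V} (huv : G.Adj u v) : (c u : ℕ) + c v = 1 := by
  have := Fin.val_ne_iff.2 (c.valid huv)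
  omega

section IntervalLabel

variable {V : Type*}

def intervalLabel (ι w : V → ℕ) (v : V) : Finset ℕ :=
  Finset.Icc (2 ^ ι v) (2 ^ ι v + w v)

variable {ι : V → ℕ} (w : V → ℕ)

lemma intervalLabel_add (u v : V) :
    intervalLabel ι w u + intervalLabel ι w v =
      Finset.Icc (2 ^ ι u + 2 ^ ι v) (2 ^ ι u + 2 ^ ι v + (w u + w v)) := by
  rw [intervalLabel, intervalLabel, Finset.Icc_add_Icc (by omega) (by omega)]
  congr 1
  ring

lemma card_intervalLabel_add (u v : V) :
    (intervalLabel ι w u + intervalLabel ι w v).card = w u + w v + 1 := by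
  rw [intervalLabel_add, Nat.card_Icc]
  omega

lemma intervalLabel_injective (hι : Function.Injective ι) :
    Function.Injective (intervalLabel ι w) := by
  intro u v h
  rw [intervalLabel, intervalLabel, Finset.Icc_eq_Icc_iff (by omega)] at h
  exact hι (Nat.pow_right_injective le_rfl h.1)

lemma two_pow_add_two_pow_eq_of_intervalLabel_add_eq {u₁ v₁ u₂ v₂ : V}
    (h : intervalLabel ι w u₁ + intervalLabel ι w v₁ = intervalLabel ι w u₂ + intervalLabel ι w v₂) :
    2 ^ ι u₁ + 2 ^ ι v₁ = 2 ^ ι u₂ + 2 ^ ι v₂ := by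
  rw [intervalLabel_add, intervalLabel_add, Finset.Icc_eq_Icc_iff (by omega)] at h
  exact h.1

theorem isIASI_intervalLabel (G : SimpleGraph V) (hι : Function.Injective ι) :
    IsIASI G (intervalLabel ι w) := by
  refine ⟨intervalLabel_injective w hι, fun v => Finset.nonempty_Icc.2 (by omega), ?_⟩
  rintro ⟨u₁, v₁⟩ h₁ ⟨u₂, v₂⟩ h₂ h
  have hpow := two_pow_add_two_pow_eq_of_intervalLabel_add_eq w h
  have hpair := Nat.sym2_eq_of_two_pow_add_two_pow_eq (hι.ne h₁.ne) (hι.ne h₂.ne) hpow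
  exact Sym2.map.injective hι (by simpa using hpair)

end IntervalLabel

theorem bipartite_uniform_IASI {V : Type*} [Fintype V] (G : SimpleGraph V)
    (hG : G.Colorable 2) (k : ℕ) (hk : 0 < k) :
    ∃ f : V → Finset ℕ, IsUniformIASI G f k := by
  obtain ⟨c⟩ := hG
  let w : V → ℕ := fun v => c v * (k - 1)
  have hι : Function.Injective fun v => (Fintype.equivFin V v : ℕ) :=
    Fin.val_injective.comp (Fintype.equivFin V).injective
  refine ⟨intervalLabel _ w, isIASI_intervalLabel w G hι, fun u v huv => ?_⟩
  rw [card_intervalLabel_add, ← add_mul, c.val_add_val_eq_one huv, one_mul]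
  omega
end

section
/- For k > 1, the complete graph K_n with n > 2 does not admit a weakly k-uniform integer additive set-indexer. -/
open Pointwise

/-!
In a weakly `k`-uniform IASI the two ends of an edge cannot both carry singletons
(their sumset is a singleton) nor both carry `k`-sets (by Cauchy–Davenport their sumset has at
least `2k - 1 > k` elements). Hence "is the label a singleton" is a proper 2-colouring, and a
graph with such a labeling is bipartite; `K_n` with `n > 2` is not.
-/

open Finset

lemma Finset.lt_card_add_of_card_eq {α : Type*} [LinearOrder α] [Add α] [IsCancelAdd α]
    [AddLeftMono α] [AddRightMono α] {s t : Finset α} {k : ℕ} (hk : 1 < k)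
    (hs : #s = k) (ht : #t = k) : k < #(s + t) := by
  have := cauchy_davenport_add_of_linearOrder_isCancelAdd
    (card_pos.1 (by omega : 0 < #s)) (card_pos.1 (by omega : 0 < #t))
  omega

lemma Finset.card_add_le_one_of_card_eq_one {α : Type*} [DecidableEq α] [Add α]
    {s t : Finset α} (hs : #s = 1) (ht : #t = 1) : #(s + t) ≤ 1 := by
  simpa [hs, ht] using card_add_le (s := s) (t := t)

namespace IsWeaklyUniformIASI

variable {V : Type*} {G : SimpleGraph V} {f : V → Finset ℕ} {k : ℕ}

lemma card_ne_of_adj (hf : IsWeaklyUniformIASI G f k) (hk : 1 < k) {u v : V}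
    (huv : G.Adj u v) : #(f u) ≠ #(f v) := by
  intro heq
  have hedge : #(f u + f v) = k := hf.1.2 u v huv
  rcases hf.2 u with hu | hu
  · have := card_add_le_one_of_card_eq_one hu (heq ▸ hu)
    omega
  · have := lt_card_add_of_card_eq hk hu (heq ▸ hu)
    omega

def singletonColoring (hf : IsWeaklyUniformIASI G f k) (hk : 1 < k) : G.Coloring Bool :=
  SimpleGraph.Coloring.mk (fun v => decide (#(f v) = 1)) fun {u v} huv hcol => by
    refine hf.card_ne_of_adj hk huv ?_
    rcases hf.2 u with hu | hu <;> rcases hf.2 v with hv | hv <;> simp_all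

lemma colorable_two (hf : IsWeaklyUniformIASI G f k) (hk : 1 < k) : G.Colorable 2 :=
  (hf.singletonColoring hk).colorable

end IsWeaklyUniformIASI

theorem complete_no_weakly_uniform_IASI (n : ℕ) (hn : 2 < n) (k : ℕ) (hk : 1 < k) :
    ¬ ∃ f : Fin n → Finset ℕ, IsWeaklyUniformIASI (⊤ : SimpleGraph (Fin n)) f k := by
  rintro ⟨f, hf⟩
  have hn' : Nat.card (Fin n) ≤ 2 :=
    (hf.colorable_two hk).card_le_of_pairwise_adj id fun _ _ h => h
  simp only [Nat.card_eq_fintype_card, Fintype.card_fin] at hn'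
  omega
end
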